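/- arXiv:1603.07356 — 3 statements merged into one kernel-verified Lean document; each statement's English description precedes it below -/
import Mathlib

section
/- Consider a 3-star graph with Neumann conditions: functions f_i(x) = A_i cos(kx) on [0, L_i] for i = 1,2,3 with k > 0. The central vertex conditions A₁cos(kL₁) = A₂cos(kL₂) = A₃cos(kL₃) and A₁sin(kL₁) + A₂sin(kL₂) + A₃sin(kL₃) = 0 admit a nonzero solution (A₁,A₂,A₃) if and only if sin(kL₁)cos(kL₂)cos(kL₃) + cos(kL₁)sin(kL₂)cos(kL₃) + cos(kL₁)cos(kL₂)sin(kL₃) = 0. -/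
/-!
The vertex conditions form a homogeneous linear system in `(A₁, A₂, A₃)` with coefficient matrix
`!![c₁, -c₂, 0; 0, c₂, -c₃; s₁, s₂, s₃]` (`cᵢ = cos (k Lᵢ)`, `sᵢ = sin (k Lᵢ)`), whose determinant is
exactly the secular expression; a square system over a field has a nonzero solution iff its
determinant vanishes.
-/

open Real Matrix

theorem exists_prod_ne_zero_iff_exists_fin_three {K : Type*} [Zero K] {P : K × K × K → Prop} :
    (∃ A, A ≠ 0 ∧ P A) ↔ ∃ v : Fin 3 → K, v ≠ 0 ∧ P (v 0, v 1, v 2) := by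
  constructor
  · rintro ⟨⟨a, b, c⟩, hA, hP⟩
    refine ⟨![a, b, c], ?_, hP⟩
    contrapose! hA
    simp_all [funext_iff, Fin.forall_fin_succ]
  · rintro ⟨v, hv, hP⟩
    refine ⟨(v 0, v 1, v 2), ?_, hP⟩
    contrapose! hv
    simp_all [funext_iff, Fin.forall_fin_succ, Prod.ext_iff]

theorem exists_ne_zero_star3_vertex_conditions_iff {K : Type*} [Field K] (c₁ c₂ c₃ s₁ s₂ s₃ : K) :
    (∃ A : K × K × K, A ≠ 0 ∧
      A.1 * c₁ = A.2.1 * c₂ ∧ A.2.1 * c₂ = A.2.2 * c₃ ∧ A.1 * s₁ + A.2.1 * s₂ + A.2.2 * s₃ = 0) ↔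
    s₁ * c₂ * c₃ + c₁ * s₂ * c₃ + c₁ * c₂ * s₃ = 0 := by
  have hdet : (!![c₁, -c₂, 0; 0, c₂, -c₃; s₁, s₂, s₃]).det =
      s₁ * c₂ * c₃ + c₁ * s₂ * c₃ + c₁ * c₂ * s₃ := by
    rw [det_fin_three]
    simp only [of_apply, cons_val', cons_val_zero, cons_val_one, cons_val, cons_val_fin_one]
    ring
  rw [← hdet, ← exists_mulVec_eq_zero_iff, exists_prod_ne_zero_iff_exists_fin_three]
  refine exists_congr fun v => and_congr_right fun _ => ?_
  simp only [funext_iff, Fin.forall_fin_succ, cons_mulVec, empty_mulVec, dotProduct,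
    Fin.sum_univ_three, cons_val_zero, cons_val_one, cons_val, cons_val_succ, cons_val_fin_one,
    Pi.zero_apply, neg_mul, zero_mul, add_zero, zero_add, forall_const]
  refine and_congr ?_ (and_congr ?_ ?_) <;> constructor <;> intro h <;> linear_combination h

theorem star3_neumann_secular_general (L₁ L₂ L₃ k : ℝ) :
    (∃ A : ℝ × ℝ × ℝ, A ≠ 0 ∧
      A.1 * cos (k * L₁) = A.2.1 * cos (k * L₂) ∧
      A.2.1 * cos (k * L₂) = A.2.2 * cos (k * L₃) ∧
      A.1 * sin (k * L₁) + A.2.1 * sin (k * L₂) + A.2.2 * sin (k * L₃) = 0) ↔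
    sin (k * L₁) * cos (k * L₂) * cos (k * L₃) + cos (k * L₁) * sin (k * L₂) * cos (k * L₃)
      + cos (k * L₁) * cos (k * L₂) * sin (k * L₃) = 0 :=
  exists_ne_zero_star3_vertex_conditions_iff _ _ _ _ _ _

/-- The Neumann 3-star vertex conditions admit a nonzero solution iff the robust
secular equation holds. -/
theorem star3_neumann_secular (L₁ L₂ L₃ k : ℝ) (hL₁ : 0 < L₁) (hL₂ : 0 < L₂) (hL₃ : 0 < L₃)
    (hk : 0 < k) :
    (∃ A : ℝ × ℝ × ℝ, A ≠ 0 ∧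
      A.1 * cos (k * L₁) = A.2.1 * cos (k * L₂) ∧
      A.2.1 * cos (k * L₂) = A.2.2 * cos (k * L₃) ∧
      A.1 * sin (k * L₁) + A.2.1 * sin (k * L₂) + A.2.2 * sin (k * L₃) = 0) ↔
    sin (k * L₁) * cos (k * L₂) * cos (k * L₃) + cos (k * L₁) * sin (k * L₂) * cos (k * L₃)
      + cos (k * L₁) * cos (k * L₂) * sin (k * L₃) = 0 :=
  star3_neumann_secular_general L₁ L₂ L₃ k
end

section
/- Between any two consecutive poles of g(k) = Σ_{i=1}^{N} cot(kL_i) there is exactly one root of g: if p < q are such that sin(kL_i) ≠ 0 for all i and all k ∈ (p,q), while sin(pL_j) = 0 and sin(qL_m) = 0 for some j, m, then there exists a unique k ∈ (p,q) with g(k) = 0. -/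
/-!
Each `cot (k * Lᵢ)` has derivative `-Lᵢ / sin² (k * Lᵢ) < 0`, so `g` is strictly decreasing
on `(p, q)`. Near a zero of `sin (k * Lⱼ)`, `cot (k * Lⱼ)` behaves like `cot` near `0`, which
tends to `+∞` from the right and to `-∞` from the left, while every other term stays bounded on
the relevant side. Hence `g` runs from `+∞` at `p⁺` to `-∞` at `q⁻`, and by the intermediate value
theorem it has a zero in `(p, q)`, unique by strict monotonicity.
-/

open Real Set Filter Topology

theorem Filter.Tendsto.finset_sum_atTop {ι α G : Type*} [AddCommGroup G] [LinearOrder G]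
    [IsOrderedAddMonoid G] {l : Filter α} {s : Finset ι} {f : ι → α → G} {j : ι}
    (hj : j ∈ s) (hfj : Tendsto (f j) l atTop)
    (hf : ∀ i ∈ s, IsBoundedUnder (· ≥ ·) l (f i)) :
    Tendsto (fun x => ∑ i ∈ s, f i x) l atTop := by
  classical
  obtain ⟨C, hC⟩ := isBoundedUnder_sum (fun _ _ => isBoundedUnder_ge_add) le_rfl (s.erase j)
    fun i hi => hf i (Finset.mem_of_mem_erase hi)
  simp_rw [← Finset.add_sum_erase s _ hj]
  exact tendsto_atTop_add_right_of_le' l C hfj (by simpa using hC)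

theorem Filter.Tendsto.finset_sum_atBot {ι α G : Type*} [AddCommGroup G] [LinearOrder G]
    [IsOrderedAddMonoid G] {l : Filter α} {s : Finset ι} {f : ι → α → G} {j : ι}
    (hj : j ∈ s) (hfj : Tendsto (f j) l atBot)
    (hf : ∀ i ∈ s, IsBoundedUnder (· ≤ ·) l (f i)) :
    Tendsto (fun x => ∑ i ∈ s, f i x) l atBot :=
  Tendsto.finset_sum_atTop (G := Gᵒᵈ) hj hfj hf

namespace Real

theorem cot_sub_of_sin_eq_zero {a : ℝ} (ha : sin a = 0) (x : ℝ) : cot (x - a) = cot x := by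
  have hcos : cos a ≠ 0 := by
    intro hc
    simpa [ha, hc] using sin_sq_add_cos_sq a
  rw [cot_eq_cos_div_sin, cot_eq_cos_div_sin, cos_sub, sin_sub, ha, mul_zero, mul_zero, add_zero,
    sub_zero, mul_div_mul_right _ _ hcos]

theorem hasDerivAt_cot {x : ℝ} (hx : sin x ≠ 0) : HasDerivAt cot (-1 / sin x ^ 2) x := by
  have h := (hasDerivAt_cos x).fun_div (hasDerivAt_sin x) hx
  rw [show (cot : ℝ → ℝ) = fun y => cos y / sin y from funext cot_eq_cos_div_sin]
  refine h.congr_deriv ?_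
  rw [← sin_sq_add_cos_sq x]
  ring

theorem hasDerivAt_cot_mul {L k : ℝ} (hk : sin (k * L) ≠ 0) :
    HasDerivAt (fun x => cot (x * L)) (-L / sin (k * L) ^ 2) k := by
  have h := (hasDerivAt_cot hk).comp k ((hasDerivAt_id k).mul_const L)
  exact h.congr_deriv (by ring)

theorem tendsto_cot_nhdsGT_zero : Tendsto cot (𝓝[>] 0) atTop := by
  have htan : Tendsto tan (𝓝[>] 0) (𝓝[>] 0) := by
    refine tendsto_nhdsWithin_iff.2 ⟨?_, ?_⟩
    · simpa using ((continuousAt_tan (x := 0)).2 (by simp)).tendsto.mono_left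
        (nhdsWithin_le_nhds (s := Ioi 0))
    · filter_upwards [Ioo_mem_nhdsGT pi_div_two_pos] with x hx
      exact tan_pos_of_pos_of_lt_pi_div_two hx.1 hx.2
  refine (tendsto_inv_nhdsGT_zero.comp htan).congr fun x => ?_
  simp [← cot_inv_eq_tan]

theorem tendsto_cot_nhdsLT_zero : Tendsto cot (𝓝[<] 0) atBot := by
  have htan : Tendsto tan (𝓝[<] 0) (𝓝[<] 0) := by
    refine tendsto_nhdsWithin_iff.2 ⟨?_, ?_⟩
    · simpa using ((continuousAt_tan (x := 0)).2 (by simp)).tendsto.mono_left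
        (nhdsWithin_le_nhds (s := Iio 0))
    · filter_upwards [Ioo_mem_nhdsLT (neg_lt_zero.2 pi_div_two_pos)] with x hx
      exact tan_neg_of_neg_of_pi_div_two_lt hx.2 hx.1
  refine (tendsto_inv_nhdsLT_zero.comp htan).congr fun x => ?_
  simp [← cot_inv_eq_tan]

section CotMul

variable {L : ℝ}

theorem tendsto_cot_mul_nhdsGT {p : ℝ} (hL : 0 < L) (hp : sin (p * L) = 0) :
    Tendsto (fun k => cot (k * L)) (𝓝[>] p) atTop := by
  have hshift : Tendsto (fun k => (k - p) * L) (𝓝[>] p) (𝓝[>] 0) := by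
    simpa using (by fun_prop : Continuous fun k : ℝ => (k - p) * L).continuousWithinAt
      |>.tendsto_nhdsWithin (x := p) (s := Ioi p) (t := Ioi 0)
        fun k hk => mul_pos (sub_pos.2 hk) hL
  refine (tendsto_cot_nhdsGT_zero.comp hshift).congr fun k => ?_
  simp [sub_mul, cot_sub_of_sin_eq_zero hp]

theorem tendsto_cot_mul_nhdsLT {q : ℝ} (hL : 0 < L) (hq : sin (q * L) = 0) :
    Tendsto (fun k => cot (k * L)) (𝓝[<] q) atBot := by
  have hshift : Tendsto (fun k => (k - q) * L) (𝓝[<] q) (𝓝[<] 0) := by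
    simpa using (by fun_prop : Continuous fun k : ℝ => (k - q) * L).continuousWithinAt
      |>.tendsto_nhdsWithin (x := q) (s := Iio q) (t := Iio 0)
        fun k hk => mul_neg_of_neg_of_pos (sub_neg.2 hk) hL
  refine (tendsto_cot_nhdsLT_zero.comp hshift).congr fun k => ?_
  simp [sub_mul, cot_sub_of_sin_eq_zero hq]

theorem isBoundedUnder_ge_cot_mul_nhdsGT (hL : 0 < L) (p : ℝ) :
    IsBoundedUnder (· ≥ ·) (𝓝[>] p) fun k => cot (k * L) := by
  by_cases hp : sin (p * L) = 0
  · exact (tendsto_cot_mul_nhdsGT hL hp).isBoundedUnder_ge_atTop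
  · exact ((hasDerivAt_cot_mul hp).continuousAt.tendsto.mono_left
      nhdsWithin_le_nhds).isBoundedUnder_ge

theorem isBoundedUnder_le_cot_mul_nhdsLT (hL : 0 < L) (q : ℝ) :
    IsBoundedUnder (· ≤ ·) (𝓝[<] q) fun k => cot (k * L) := by
  by_cases hq : sin (q * L) = 0
  · exact (tendsto_cot_mul_nhdsLT hL hq).isBoundedUnder_le_atBot
  · exact ((hasDerivAt_cot_mul hq).continuousAt.tendsto.mono_left
      nhdsWithin_le_nhds).isBoundedUnder_le

end CotMul

section SumCotMul

variable {ι : Type*} [Fintype ι] {L : ι → ℝ} {s : Set ℝ}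

theorem continuousOn_sum_cot_mul (hs : ∀ k ∈ s, ∀ i, sin (k * L i) ≠ 0) :
    ContinuousOn (fun k => ∑ i, cot (k * L i)) s :=
  continuousOn_finsetSum _ fun i _ k hk =>
    (hasDerivAt_cot_mul (hs k hk i)).continuousAt.continuousWithinAt

theorem strictAntiOn_sum_cot_mul [Nonempty ι] (hL : ∀ i, 0 < L i) (hconv : Convex ℝ s)
    (hs : ∀ k ∈ s, ∀ i, sin (k * L i) ≠ 0) :
    StrictAntiOn (fun k => ∑ i, cot (k * L i)) s := by
  refine strictAntiOn_of_hasDerivWithinAt_neg hconv (continuousOn_sum_cot_mul hs)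
    (f' := fun k => ∑ i, -L i / sin (k * L i) ^ 2) (fun k hk => ?_) fun k hk => ?_
  · have hk := interior_subset hk
    exact (HasDerivAt.fun_sum fun i _ => hasDerivAt_cot_mul (hs k hk i)).hasDerivWithinAt
  · refine Finset.sum_neg (fun i _ => div_neg_of_neg_of_pos (neg_neg_of_pos (hL i)) ?_)
      Finset.univ_nonempty
    have := hs k (interior_subset hk) i
    positivity

end SumCotMul

end Real

theorem cot_sum_unique_root_between_poles_general (N : ℕ) (L : Fin N → ℝ)
    (hL : ∀ i, 0 < L i) (p q : ℝ) (hpq : p < q)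
    (hreg : ∀ k ∈ Ioo p q, ∀ i, sin (k * L i) ≠ 0)
    (hpolep : ∃ j, sin (p * L j) = 0) (hpoleq : ∃ m, sin (q * L m) = 0) :
    ∃! k, k ∈ Ioo p q ∧ (∑ i, cos (k * L i) / sin (k * L i)) = 0 := by
  obtain ⟨j, hj⟩ := hpolep
  obtain ⟨m, hm⟩ := hpoleq
  have : Nonempty (Fin N) := ⟨j⟩
  simp only [← cot_eq_cos_div_sin]
  have htop : Tendsto (fun k => ∑ i, cot (k * L i)) (𝓝[>] p) atTop :=
    .finset_sum_atTop (Finset.mem_univ j) (tendsto_cot_mul_nhdsGT (hL j) hj)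
      fun i _ => isBoundedUnder_ge_cot_mul_nhdsGT (hL i) p
  have hbot : Tendsto (fun k => ∑ i, cot (k * L i)) (𝓝[<] q) atBot :=
    .finset_sum_atBot (Finset.mem_univ m) (tendsto_cot_mul_nhdsLT (hL m) hm)
      fun i _ => isBoundedUnder_le_cot_mul_nhdsLT (hL i) q
  obtain ⟨k, hk, hk0⟩ := (continuousOn_sum_cot_mul hreg).surjOn_of_tendsto'
    (nonempty_Ioo.2 hpq) ((tendsto_comp_coe_Ioo_atBot hpq).2 htop)
    ((tendsto_comp_coe_Ioo_atTop hpq).2 hbot) (mem_univ 0)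
  exact ⟨k, ⟨hk, hk0⟩, fun y hy =>
    (strictAntiOn_sum_cot_mul hL (convex_Ioo p q) hreg).injOn hy.1 hk (hy.2.trans hk0.symm)⟩

/-- Between two consecutive poles of `g k = ∑ i, cot (k L i)` there is exactly one
root of `g`. -/
theorem cot_sum_unique_root_between_poles (N : ℕ) (hN : 1 ≤ N) (L : Fin N → ℝ)
    (hL : ∀ i, 0 < L i) (p q : ℝ) (hp : 0 < p) (hpq : p < q)
    (hreg : ∀ k ∈ Ioo p q, ∀ i, sin (k * L i) ≠ 0)
    (hpolep : ∃ j, sin (p * L j) = 0) (hpoleq : ∃ m, sin (q * L m) = 0) :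
    ∃! k, k ∈ Ioo p q ∧ (∑ i, cos (k * L i) / sin (k * L i)) = 0 :=
  cot_sum_unique_root_between_poles_general N L hL p q hpq hreg hpolep hpoleq
end

section
/- Mandarin secular determinant factorizes: for the 6×6 matrix S whose off-diagonal 3×3 blocks both equal M = [[−1/3,2/3,2/3],[2/3,−1/3,2/3],[2/3,2/3,−1/3]] and diagonal blocks are zero, and D = diag(z₁,z₂,z₃,z₁,z₂,z₃), one has det(I − SD) = (−z₁z₂z₃ − (1/3)(z₁z₂+z₂z₃+z₃z₁) + (1/3)(z₁+z₂+z₃) + 1) · (z₁z₂z₃ − (1/3)(z₁z₂+z₂z₃+z₃z₁) − (1/3)(z₁+z₂+z₃) + 1). -/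
set_option maxHeartbeats 1000000

open Matrix

lemma cons_val_five' {α : Type*} (x : α) (u : Fin 5 → α) : vecCons x u 5 = u 4 := rfl

/-- The secular determinant of the 3-mandarin graph factorizes into the Neumann-star
and Dirichlet-star secular determinants. -/
theorem mandarin_secular_factorization (z₁ z₂ z₃ : ℂ) :
    det ((1 : Matrix (Fin 6) (Fin 6) ℂ) -
        (!![0, 0, 0, -1/3, 2/3, 2/3;
            0, 0, 0, 2/3, -1/3, 2/3;
            0, 0, 0, 2/3, 2/3, -1/3;
            -1/3, 2/3, 2/3, 0, 0, 0;
            2/3, -1/3, 2/3, 0, 0, 0;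
            2/3, 2/3, -1/3, 0, 0, 0] : Matrix (Fin 6) (Fin 6) ℂ) *
          Matrix.diagonal ![z₁, z₂, z₃, z₁, z₂, z₃]) =
      (-(z₁ * z₂ * z₃) - (1/3) * (z₁ * z₂ + z₂ * z₃ + z₃ * z₁)
          + (1/3) * (z₁ + z₂ + z₃) + 1) *
        (z₁ * z₂ * z₃ - (1/3) * (z₁ * z₂ + z₂ * z₃ + z₃ * z₁)
          - (1/3) * (z₁ + z₂ + z₃) + 1) := by
  set B : Matrix (Fin 3) (Fin 3) ℂ :=
    !![z₁/3, -2*z₂/3, -2*z₃/3; -2*z₁/3, z₂/3, -2*z₃/3; -2*z₁/3, -2*z₂/3, z₃/3] with hB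
  set N : Matrix (Fin 6) (Fin 6) ℂ :=
    ((1 : Matrix (Fin 6) (Fin 6) ℂ) -
        (!![0, 0, 0, -1/3, 2/3, 2/3;
            0, 0, 0, 2/3, -1/3, 2/3;
            0, 0, 0, 2/3, 2/3, -1/3;
            -1/3, 2/3, 2/3, 0, 0, 0;
            2/3, -1/3, 2/3, 0, 0, 0;
            2/3, 2/3, -1/3, 0, 0, 0] : Matrix (Fin 6) (Fin 6) ℂ) *
          Matrix.diagonal ![z₁, z₂, z₃, z₁, z₂, z₃]) with hN
  have e0 : (Fin.castAdd 3 (0 : Fin 3)) = (0 : Fin 6) := rfl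
  have e1 : (Fin.castAdd 3 (1 : Fin 3)) = (1 : Fin 6) := rfl
  have e2 : (Fin.castAdd 3 (2 : Fin 3)) = (2 : Fin 6) := rfl
  have e3 : (Fin.natAdd 3 (0 : Fin 3)) = (3 : Fin 6) := rfl
  have e4 : (Fin.natAdd 3 (1 : Fin 3)) = (4 : Fin 6) := rfl
  have e5 : (Fin.natAdd 3 (2 : Fin 3)) = (5 : Fin 6) := rfl
  have f3 : ((0 : Fin 3).addNat 3) = (3 : Fin 6) := rfl
  have f4 : ((1 : Fin 3).addNat 3) = (4 : Fin 6) := rfl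
  have f5 : ((2 : Fin 3).addNat 3) = (5 : Fin 6) := rfl
  have h : Matrix.fromBlocks 1 B B 1 = N.submatrix finSumFinEquiv finSumFinEquiv := by
    ext i j
    rcases i with i | i <;> rcases j with j | j <;> fin_cases i <;> fin_cases j <;>
      simp [hB, hN, Matrix.vecMul_diagonal, Matrix.one_apply, cons_val_five',
        Matrix.vecHead, Matrix.vecTail, finSumFinEquiv, e0, e1, e2, e3, e4, e5, f3, f4, f5] <;> ring
  rw [← Matrix.det_submatrix_equiv_self (finSumFinEquiv : Fin 3 ⊕ Fin 3 ≃ Fin 6), ← h,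
    Matrix.det_fromBlocks_one₁₁, Matrix.det_fin_three]
  simp [hB, Matrix.mul_apply, Fin.sum_univ_three, Matrix.one_apply]
  ring
end
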